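/- Let A = Q Kᵀ / √d where Q ∈ ℝ^{m×2} has rows αᵢ R(φᵢ)q with αᵢ ≥ α_min > 0 and K ∈ ℝ^{n×2} has rows βⱼ R(θⱼ)k with βⱼ ≥ β_min > 0, both satisfying cone conditions with half-angles γ_Q, γ_K < π/2 around mean unit directions u_Q, u_K with ⟨u_Q, u_K⟩ = cos ψ̄ and ψ̄ + γ_Q + γ_K < π/2. Then max_{i,j} |A_{ij}| ≥ (α_min β_min/√d) ‖q‖ ‖k‖ cos γ_Q cos γ_K cos(ψ̄ + γ_Q + γ_K), a bound independent of m and n. -/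

import Mathlib

open scoped BigOperators Matrix

/-- The 2×2 rotation matrix by angle φ. -/
noncomputable def rot (φ : ℝ) : Matrix (Fin 2) (Fin 2) ℝ :=
  !![Real.cos φ, -Real.sin φ; Real.sin φ, Real.cos φ]

/-- Euclidean norm via the dot product. -/
noncomputable def enorm2 {d : ℕ} (v : Fin d → ℝ) : ℝ :=
  Real.sqrt (v ⬝ᵥ v)

set_option maxHeartbeats 1000000


lemma key_ineq (γQ γK ψ : ℝ) (hγQ0 : 0 ≤ γQ) (hγK0 : 0 ≤ γK) (hψ0 : 0 ≤ ψ)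
    (hsum : ψ + γQ + γK < Real.pi / 2)
    (u0 u1 v0 v1 x0 x1 y0 y1 : ℝ)
    (hu : u0^2 + u1^2 = 1) (hv : v0^2 + v1^2 = 1)
    (hx : Real.sqrt (x0^2 + x1^2) * Real.cos γQ ≤ u0*x0 + u1*x1)
    (hy : Real.sqrt (y0^2 + y1^2) * Real.cos γK ≤ v0*y0 + v1*y1)
    (huv : u0*v0 + u1*v1 = Real.cos ψ) :
    Real.sqrt (x0^2 + x1^2) * Real.sqrt (y0^2 + y1^2) * Real.cos (ψ + γQ + γK)
      ≤ x0*y0 + x1*y1 := by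
  have hpi : (0:ℝ) < Real.pi / 2 := by positivity
  set X := Real.sqrt (x0^2 + x1^2) with hXdef
  set Y := Real.sqrt (y0^2 + y1^2) with hYdef
  have hX0 : 0 ≤ X := Real.sqrt_nonneg _
  have hY0 : 0 ≤ Y := Real.sqrt_nonneg _
  have hX2 : X^2 = x0^2 + x1^2 := Real.sq_sqrt (by positivity)
  have hY2 : Y^2 = y0^2 + y1^2 := Real.sq_sqrt (by positivity)
  rcases eq_or_lt_of_le hX0 with hX | hX
  · have h0 : x0^2 + x1^2 = 0 := by rw [← hX2, ← hX]; ring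
    have hx0 : x0 = 0 := by nlinarith [sq_nonneg x0, sq_nonneg x1]
    have hx1 : x1 = 0 := by nlinarith [sq_nonneg x0, sq_nonneg x1]
    rw [hx0, hx1, ← hX]; norm_num
  rcases eq_or_lt_of_le hY0 with hY | hY
  · have h0 : y0^2 + y1^2 = 0 := by rw [← hY2, ← hY]; ring
    have hy0 : y0 = 0 := by nlinarith [sq_nonneg y0, sq_nonneg y1]
    have hy1 : y1 = 0 := by nlinarith [sq_nonneg y0, sq_nonneg y1]
    rw [hy0, hy1, ← hY]; norm_num
  -- basic angle facts
  have hγQπ : γQ < Real.pi / 2 := by linarith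
  have hγKπ : γK < Real.pi / 2 := by linarith
  have hψπ : ψ < Real.pi / 2 := by linarith
  have hcψ : 0 ≤ Real.cos ψ := Real.cos_nonneg_of_mem_Icc ⟨by linarith, hψπ.le⟩
  have hsψ : 0 ≤ Real.sin ψ := Real.sin_nonneg_of_nonneg_of_le_pi hψ0 (by linarith [Real.pi_pos])
  have hcγQ : 0 < Real.cos γQ := Real.cos_pos_of_mem_Ioo ⟨by linarith, hγQπ⟩
  have hcγK : 0 < Real.cos γK := Real.cos_pos_of_mem_Ioo ⟨by linarith, hγKπ⟩
  -- decompositions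
  set p := u0*x0 + u1*x1 with hpdef
  set p' := u0*x1 - u1*x0 with hp'def
  set r := v0*y0 + v1*y1 with hrdef
  set r' := v0*y1 - v1*y0 with hr'def
  set s := u1*v0 - u0*v1 with hsdef
  have hpp : p^2 + p'^2 = X^2 := by
    rw [hX2]; simp only [hpdef, hp'def]; linear_combination (x0^2 + x1^2) * hu
  have hrr : r^2 + r'^2 = Y^2 := by
    rw [hY2]; simp only [hrdef, hr'def]; linear_combination (y0^2 + y1^2) * hv
  have hcs : Real.cos ψ^2 + s^2 = 1 := by
    rw [← huv]; simp only [hsdef]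
    linear_combination (v0^2 + v1^2) * hu + hv
  have hxyid : x0*y0 + x1*y1 = Real.cos ψ*(p*r + p'*r') + s*(p*r' - p'*r) := by
    rw [← huv]; simp only [hpdef, hp'def, hrdef, hr'def, hsdef]
    linear_combination (-(x0*y0 + x1*y1)) * (v0^2 + v1^2) * hu - (x0*y0 + x1*y1) * hv
  have hppos : 0 < p := lt_of_lt_of_le (by positivity) hx
  have hrpos : 0 < r := lt_of_lt_of_le (by positivity) hy
  have hpX : p ≤ X := by
    have h2 : p^2 ≤ X^2 := by linarith only [sq_nonneg p', hpp]
    calc p = Real.sqrt (p^2) := (Real.sqrt_sq hppos.le).symm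
      _ ≤ Real.sqrt (X^2) := Real.sqrt_le_sqrt h2
      _ = X := Real.sqrt_sq hX0
  have hrY : r ≤ Y := by
    have h2 : r^2 ≤ Y^2 := by linarith only [sq_nonneg r', hrr]
    calc r = Real.sqrt (r^2) := (Real.sqrt_sq hrpos.le).symm
      _ ≤ Real.sqrt (Y^2) := Real.sqrt_le_sqrt h2
      _ = Y := Real.sqrt_sq hY0
  -- angles a, b
  set a := Real.arccos (p / X) with hadef
  set b := Real.arccos (r / Y) with hbdef
  have hpX1 : p / X ≤ 1 := by rw [div_le_one hX]; exact hpX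
  have hpXm1 : (-1:ℝ) ≤ p / X := by
    have h0 : (0:ℝ) ≤ p / X := by positivity
    linarith only [h0]
  have hrY1 : r / Y ≤ 1 := by rw [div_le_one hY]; exact hrY
  have hrYm1 : (-1:ℝ) ≤ r / Y := by
    have h0 : (0:ℝ) ≤ r / Y := by positivity
    linarith only [h0]
  have hca : Real.cos a = p / X := Real.cos_arccos hpXm1 hpX1
  have hcb : Real.cos b = r / Y := Real.cos_arccos hrYm1 hrY1
  have hpa : p = X * Real.cos a := by rw [hca]; field_simp
  have hrb : r = Y * Real.cos b := by rw [hcb]; field_simp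
  have ha0 : 0 ≤ a := Real.arccos_nonneg _
  have hb0 : 0 ≤ b := Real.arccos_nonneg _
  have haπ : a ≤ Real.pi := Real.arccos_le_pi _
  have hbπ : b ≤ Real.pi := Real.arccos_le_pi _
  have hsa : 0 ≤ Real.sin a := Real.sin_nonneg_of_nonneg_of_le_pi ha0 haπ
  have hsb : 0 ≤ Real.sin b := Real.sin_nonneg_of_nonneg_of_le_pi hb0 hbπ
  have harccos_anti : ∀ {w z : ℝ}, w ≤ z → Real.arccos z ≤ Real.arccos w := by
    intro w z h
    rw [Real.arccos_eq_pi_div_two_sub_arcsin, Real.arccos_eq_pi_div_two_sub_arcsin]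
    linarith only [Real.monotone_arcsin h]
  have haγQ : a ≤ γQ := by
    have h1 : Real.cos γQ ≤ p / X := by rw [le_div_iff₀ hX]; linarith only [hx]
    calc a = Real.arccos (p/X) := rfl
      _ ≤ Real.arccos (Real.cos γQ) := harccos_anti h1
      _ = γQ := Real.arccos_cos hγQ0 (by linarith [Real.pi_pos])
  have hbγK : b ≤ γK := by
    have h1 : Real.cos γK ≤ r / Y := by rw [le_div_iff₀ hY]; linarith only [hy]
    calc b = Real.arccos (r/Y) := rfl
      _ ≤ Real.arccos (Real.cos γK) := harccos_anti h1
      _ = γK := Real.arccos_cos hγK0 (by linarith [Real.pi_pos])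
  -- |p'| = X sin a  (up to sign)
  have hsinacos : Real.sin a ^ 2 = 1 - (p/X)^2 := by
    have h := Real.sin_sq_add_cos_sq a; rw [hca] at h; linarith only [h]
  have hp'sq : p'^2 = (X * Real.sin a)^2 := by
    have h2 : (X * Real.sin a)^2 = X^2 - p^2 := by
      rw [mul_pow, hsinacos]; field_simp
    rw [h2]; linarith only [hpp]
  have hp'cases : p' = X * Real.sin a ∨ p' = -(X * Real.sin a) := by
    have h : (p' - X * Real.sin a) * (p' + X * Real.sin a) = 0 := by linear_combination hp'sq
    rcases mul_eq_zero.mp h with h | h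
    · left; linarith only [h]
    · right; linarith only [h]
  have hsinbcos : Real.sin b ^ 2 = 1 - (r/Y)^2 := by
    have h := Real.sin_sq_add_cos_sq b; rw [hcb] at h; linarith only [h]
  have hr'sq : r'^2 = (Y * Real.sin b)^2 := by
    have h2 : (Y * Real.sin b)^2 = Y^2 - r^2 := by
      rw [mul_pow, hsinbcos]; field_simp
    rw [h2]; linarith only [hrr]
  have hr'cases : r' = Y * Real.sin b ∨ r' = -(Y * Real.sin b) := by
    have h : (r' - Y * Real.sin b) * (r' + Y * Real.sin b) = 0 := by linear_combination hr'sq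
    rcases mul_eq_zero.mp h with h | h
    · left; linarith only [h]
    · right; linarith only [h]
  have hscases : s = Real.sin ψ ∨ s = -Real.sin ψ := by
    have hs2 : s^2 = Real.sin ψ^2 := by linear_combination hcs - Real.sin_sq_add_cos_sq ψ
    have h : (s - Real.sin ψ) * (s + Real.sin ψ) = 0 := by linear_combination hs2
    rcases mul_eq_zero.mp h with h | h
    · left; linarith only [h]
    · right; linarith only [h]
  -- monotonicity step
  have hmono : Real.cos (ψ + γQ + γK) ≤ Real.cos (ψ + a + b) := by
    apply Real.cos_le_cos_of_nonneg_of_le_pi (by positivity) (by linarith [Real.pi_pos]) (by linarith)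
  have hkey : X * Y * Real.cos (ψ + a + b) ≤ x0*y0 + x1*y1 := by
    rw [hxyid]
    have hexp : Real.cos (ψ + a + b)
        = Real.cos ψ * (Real.cos a * Real.cos b - Real.sin a * Real.sin b)
          - Real.sin ψ * (Real.sin a * Real.cos b + Real.cos a * Real.sin b) := by
      rw [Real.cos_add, Real.cos_add, Real.sin_add]; ring
    rw [hexp, hpa, hrb]
    have h1 : 0 ≤ X * Y * (Real.cos ψ * (Real.sin a * Real.sin b)) := by positivity
    have h2 : 0 ≤ X * Y * (Real.sin ψ * (Real.cos a * Real.sin b)) := by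
      have hca0 : 0 ≤ Real.cos a := by rw [hca]; positivity
      positivity
    have h3 : 0 ≤ X * Y * (Real.sin ψ * (Real.sin a * Real.cos b)) := by
      have hcb0 : 0 ≤ Real.cos b := by rw [hcb]; positivity
      positivity
    rcases hp'cases with hp' | hp' <;> rcases hr'cases with hr' | hr' <;>
      rcases hscases with hs | hs <;> rw [hp', hr', hs] <;> linarith only [h1, h2, h3]
  calc X * Y * Real.cos (ψ + γQ + γK) ≤ X * Y * Real.cos (ψ + a + b) := by
        apply mul_le_mul_of_nonneg_left hmono (by positivity)
    _ ≤ x0*y0 + x1*y1 := hkey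

lemma enorm_eq (v : Fin 2 → ℝ) : enorm2 v = Real.sqrt (v 0^2 + v 1^2) := by
  unfold enorm2
  congr 1
  simp [dotProduct, Fin.sum_univ_two]
  ring

lemma enorm_nonneg' (v : Fin 2 → ℝ) : 0 ≤ enorm2 v := Real.sqrt_nonneg _

lemma rot_mulVec0 (φ : ℝ) (v : Fin 2 → ℝ) :
    (rot φ).mulVec v 0 = Real.cos φ * v 0 - Real.sin φ * v 1 := by
  simp [rot, Matrix.mulVec, dotProduct, Fin.sum_univ_two]
  ring

lemma rot_mulVec1 (φ : ℝ) (v : Fin 2 → ℝ) :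
    (rot φ).mulVec v 1 = Real.sin φ * v 0 + Real.cos φ * v 1 := by
  simp [rot, Matrix.mulVec, dotProduct, Fin.sum_univ_two]

lemma rot_norm_sq (φ : ℝ) (v : Fin 2 → ℝ) :
    ((rot φ).mulVec v 0)^2 + ((rot φ).mulVec v 1)^2 = v 0^2 + v 1^2 := by
  rw [rot_mulVec0, rot_mulVec1]
  linear_combination (v 0^2 + v 1^2) * Real.sin_sq_add_cos_sq φ

/-- for the attention band score matrix A = QKᵀ/√d, with query
rows αᵢ R(φᵢ)q and key rows βⱼ R(θⱼ)k satisfying cone conditions with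
half-angles γ_Q, γ_K around mean unit directions u_Q, u_K at angle ψ̄ with
ψ̄ + γ_Q + γ_K < π/2, some entry of A is at least
(α_min β_min/√d) ‖q‖ ‖k‖ cos γ_Q cos γ_K cos(ψ̄ + γ_Q + γ_K) in absolute value,
a bound independent of m and n. -/
theorem band_entry_lower_bound {m n d : ℕ} (hm : 0 < m) (hn : 0 < n)
    (hd : 0 < d)
    (Q : Matrix (Fin m) (Fin 2) ℝ) (K : Matrix (Fin n) (Fin 2) ℝ)
    (q k uQ uK : Fin 2 → ℝ) (huQ : enorm2 uQ = 1) (huK : enorm2 uK = 1)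
    (φ : Fin m → ℝ) (θ : Fin n → ℝ)
    (α : Fin m → ℝ) (β : Fin n → ℝ) (αmin βmin : ℝ)
    (hαmin : 0 < αmin) (hβmin : 0 < βmin)
    (hα : ∀ i, αmin ≤ α i) (hβ : ∀ j, βmin ≤ β j)
    (hQ : ∀ i, Q i = α i • (rot (φ i)).mulVec q)
    (hK : ∀ j, K j = β j • (rot (θ j)).mulVec k)
    (γQ γK ψbar : ℝ) (hγQ0 : 0 ≤ γQ) (hγK0 : 0 ≤ γK) (hψ0 : 0 ≤ ψbar)
    (hconeQ : ∀ i, enorm2 q * Real.cos γQ ≤ uQ ⬝ᵥ (rot (φ i)).mulVec q)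
    (hconeK : ∀ j, enorm2 k * Real.cos γK ≤ uK ⬝ᵥ (rot (θ j)).mulVec k)
    (hangle : uQ ⬝ᵥ uK = Real.cos ψbar)
    (hsum : ψbar + γQ + γK < Real.pi / 2)
    (A : Matrix (Fin m) (Fin n) ℝ)
    (hA : A = (1 / Real.sqrt d) • (Q * K.transpose)) :
    ∃ i : Fin m, ∃ j : Fin n,
      αmin * βmin / Real.sqrt d * enorm2 q * enorm2 k *
        Real.cos γQ * Real.cos γK * Real.cos (ψbar + γQ + γK) ≤ |A i j| := by
  refine ⟨⟨0, hm⟩, ⟨0, hn⟩, ?_⟩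
  set i : Fin m := ⟨0, hm⟩
  set j : Fin n := ⟨0, hn⟩
  set x : Fin 2 → ℝ := (rot (φ i)).mulVec q with hxdef
  set y : Fin 2 → ℝ := (rot (θ j)).mulVec k with hydef
  have hxq : x 0^2 + x 1^2 = q 0^2 + q 1^2 := rot_norm_sq _ _
  have hyk : y 0^2 + y 1^2 = k 0^2 + k 1^2 := rot_norm_sq _ _
  have henq : enorm2 q = Real.sqrt (x 0^2 + x 1^2) := by rw [enorm_eq, hxq]
  have henk : enorm2 k = Real.sqrt (y 0^2 + y 1^2) := by rw [enorm_eq, hyk]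
  have hu : uQ 0^2 + uQ 1^2 = 1 := by
    have h := huQ
    rw [enorm_eq] at h
    have := Real.sqrt_eq_one.mp h
    linarith only [this]
  have hv : uK 0^2 + uK 1^2 = 1 := by
    have h := huK
    rw [enorm_eq] at h
    have := Real.sqrt_eq_one.mp h
    linarith only [this]
  have hxcone : Real.sqrt (x 0^2 + x 1^2) * Real.cos γQ ≤ uQ 0 * x 0 + uQ 1 * x 1 := by
    have h := hconeQ i
    rw [henq] at h
    simpa only [dotProduct, Fin.sum_univ_two] using h
  have hycone : Real.sqrt (y 0^2 + y 1^2) * Real.cos γK ≤ uK 0 * y 0 + uK 1 * y 1 := by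
    have h := hconeK j
    rw [henk] at h
    simpa only [dotProduct, Fin.sum_univ_two] using h
  have huv : uQ 0 * uK 0 + uQ 1 * uK 1 = Real.cos ψbar := by
    have h := hangle
    simpa [dotProduct, Fin.sum_univ_two] using h
  have hkey := key_ineq γQ γK ψbar hγQ0 hγK0 hψ0 hsum
    (uQ 0) (uQ 1) (uK 0) (uK 1) (x 0) (x 1) (y 0) (y 1) hu hv hxcone hycone huv
  -- rewrite the key inequality in terms of enorm2
  rw [← henq, ← henk] at hkey
  set S := x 0 * y 0 + x 1 * y 1 with hSdef
  set cSum := Real.cos (ψbar + γQ + γK) with hcSumdef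
  have hcSum0 : 0 ≤ cSum := by
    apply Real.cos_nonneg_of_mem_Icc
    constructor
    · linarith [Real.pi_pos]
    · linarith
  have hE0 : 0 ≤ enorm2 q * enorm2 k * cSum := by
    have h1 := enorm_nonneg' q
    have h2 := enorm_nonneg' k
    positivity
  have hS0 : 0 ≤ S := le_trans hE0 hkey
  -- compute A i j
  have hAij : A i j = 1 / Real.sqrt d * (α i * β j * S) := by
    rw [hA]
    simp only [Matrix.smul_apply, Matrix.mul_apply, Fin.sum_univ_two,
      Matrix.transpose_apply, smul_eq_mul]
    rw [hQ i, hK j]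
    simp only [Pi.smul_apply, smul_eq_mul, ← hxdef, ← hydef, hSdef]
    ring
  have hsd : 0 < Real.sqrt d := Real.sqrt_pos.mpr (by exact_mod_cast hd)
  have hαi : 0 < α i := lt_of_lt_of_le hαmin (hα i)
  have hβj : 0 < β j := lt_of_lt_of_le hβmin (hβ j)
  have hαβ : αmin * βmin ≤ α i * β j :=
    mul_le_mul (hα i) (hβ j) hβmin.le hαi.le
  have hγprod : Real.cos γQ * Real.cos γK ≤ 1 :=
    mul_le_one₀ (Real.cos_le_one _) (Real.cos_nonneg_of_mem_Icc
      ⟨by linarith [Real.pi_pos], by linarith⟩) (Real.cos_le_one _)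
  have hcγQ0 : 0 ≤ Real.cos γQ :=
    Real.cos_nonneg_of_mem_Icc ⟨by linarith [Real.pi_pos], by linarith⟩
  have hcγK0 : 0 ≤ Real.cos γK :=
    Real.cos_nonneg_of_mem_Icc ⟨by linarith [Real.pi_pos], by linarith⟩
  have henq0 := enorm_nonneg' q
  have henk0 := enorm_nonneg' k
  have step1 : αmin * βmin * enorm2 q * enorm2 k * Real.cos γQ * Real.cos γK * cSum
      ≤ αmin * βmin * (enorm2 q * enorm2 k * cSum) := by
    have hbase : 0 ≤ αmin * βmin * (enorm2 q * enorm2 k * cSum) := by positivity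
    have heq : αmin * βmin * enorm2 q * enorm2 k * Real.cos γQ * Real.cos γK * cSum
        = (αmin * βmin * (enorm2 q * enorm2 k * cSum)) * (Real.cos γQ * Real.cos γK) := by ring
    rw [heq]
    calc (αmin * βmin * (enorm2 q * enorm2 k * cSum)) * (Real.cos γQ * Real.cos γK)
        ≤ (αmin * βmin * (enorm2 q * enorm2 k * cSum)) * 1 :=
          mul_le_mul_of_nonneg_left hγprod hbase
      _ = αmin * βmin * (enorm2 q * enorm2 k * cSum) := by ring
  have step2 : αmin * βmin * (enorm2 q * enorm2 k * cSum) ≤ α i * β j * S :=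
    mul_le_mul hαβ hkey hE0 (by positivity)
  have step3 : αmin * βmin / Real.sqrt d * enorm2 q * enorm2 k *
      Real.cos γQ * Real.cos γK * cSum ≤ A i j := by
    rw [hAij]
    have heq : αmin * βmin / Real.sqrt d * enorm2 q * enorm2 k *
        Real.cos γQ * Real.cos γK * cSum
        = 1 / Real.sqrt d * (αmin * βmin * enorm2 q * enorm2 k *
            Real.cos γQ * Real.cos γK * cSum) := by ring
    rw [heq]
    apply mul_le_mul_of_nonneg_left _ (by positivity)
    exact le_trans step1 step2
  exact le_trans step3 (le_abs_self _)
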